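/- arXiv:2302.01473 — 3 statements merged into one kernel-verified Lean document; each statement's English description precedes it below -/
import Mathlib

section
/- The function ζ ↦ (|ζ|² + √(|ζ|⁴ - ||ζ|_ℂ²|²))^{1/2} is a norm on ℂⁿ (viewed as a real or complex vector space). -/
/-- The Lie norm on `ℂⁿ`: `‖ζ‖_{L_n} = (|ζ|² + √(|ζ|⁴ − ||ζ|_ℂ²|²))^{1/2}`. -/
noncomputable def lieNorm (n : ℕ) (ζ : EuclideanSpace ℂ (Fin n)) : ℝ :=
  Real.sqrt (‖ζ‖ ^ 2 + Real.sqrt (‖ζ‖ ^ 4 - ‖∑ j, ζ j ^ 2‖ ^ 2))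

/-! Writing `ζ = x + i y` with `x, y ∈ ℝⁿ`, one has
`‖ζ‖_{L_n}² = |x|² + |y|² + 2 √(|x|²|y|² - ⟪x, y⟫²)`, the squared trace norm of the real
`n × 2` matrix `(x y)`. Multiplying `ζ` by a unit scalar preserves the Lie norm and can make
`x ⊥ y`, and then `‖ζ‖_{L_n} = |x| + |y|`. Hence `‖ζ‖_{L_n}` is the maximum of `Re ⟪w, ζ⟫` over the
set of `w` with `|Re (μ w)| ≤ 1` for all `|μ| = 1`: Cauchy–Schwarz bounds each of these functionals,
and for `x ⊥ y` the vector `w = x / |x| + i y / |y|` attains the bound. A maximum of real-linear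
functionals is subadditive. -/

namespace LieNorm

open Finset

section

variable {ι : Type*}

lemma norm_sq_eq_sum_re_sq_add_sum_im_sq [Fintype ι] (ζ : EuclideanSpace ℂ ι) :
    ‖ζ‖ ^ 2 = ∑ j, (ζ j).re ^ 2 + ∑ j, (ζ j).im ^ 2 := by
  rw [EuclideanSpace.norm_eq, Real.sq_sqrt (by positivity), ← sum_add_distrib]
  exact sum_congr rfl fun j _ => by rw [Complex.sq_norm, Complex.normSq_apply]; ring

lemma re_sum_sq (s : Finset ι) (ζ : ι → ℂ) :
    (∑ j ∈ s, ζ j ^ 2).re = ∑ j ∈ s, (ζ j).re ^ 2 - ∑ j ∈ s, (ζ j).im ^ 2 := by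
  rw [Complex.re_sum, ← sum_sub_distrib]
  exact sum_congr rfl fun j _ => by rw [sq, Complex.mul_re]; ring

lemma im_sum_sq (s : Finset ι) (ζ : ι → ℂ) :
    (∑ j ∈ s, ζ j ^ 2).im = 2 * ∑ j ∈ s, (ζ j).re * (ζ j).im := by
  rw [Complex.im_sum, mul_sum]
  exact sum_congr rfl fun j _ => by rw [sq, Complex.mul_im]; ring

lemma re_inner [Fintype ι] (w ζ : EuclideanSpace ℂ ι) :
    (inner ℂ w ζ).re = ∑ j, (w j).re * (ζ j).re + ∑ j, (w j).im * (ζ j).im := by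
  rw [PiLp.inner_apply, Complex.re_sum, ← sum_add_distrib]
  exact sum_congr rfl fun j _ => by
    rw [RCLike.inner_apply, Complex.mul_re, Complex.conj_re, Complex.conj_im]; ring

lemma re_inner_le_sqrt_add_sqrt [Fintype ι] {w : EuclideanSpace ℂ ι}
    (hre : ∑ j, (w j).re ^ 2 ≤ 1) (him : ∑ j, (w j).im ^ 2 ≤ 1) (ζ : EuclideanSpace ℂ ι) :
    (inner ℂ w ζ).re ≤ √(∑ j, (ζ j).re ^ 2) + √(∑ j, (ζ j).im ^ 2) := by
  rw [re_inner]
  gcongr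
  · calc ∑ j, (w j).re * (ζ j).re
        ≤ √(∑ j, (w j).re ^ 2) * √(∑ j, (ζ j).re ^ 2) := Real.sum_mul_le_sqrt_mul_sqrt _ _ _
      _ ≤ √(∑ j, (ζ j).re ^ 2) :=
        mul_le_of_le_one_left (by positivity) (Real.sqrt_le_one.mpr hre)
  · calc ∑ j, (w j).im * (ζ j).im
        ≤ √(∑ j, (w j).im ^ 2) * √(∑ j, (ζ j).im ^ 2) := Real.sum_mul_le_sqrt_mul_sqrt _ _ _
      _ ≤ √(∑ j, (ζ j).im ^ 2) :=
        mul_le_of_le_one_left (by positivity) (Real.sqrt_le_one.mpr him)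

lemma inner_smul_smul_of_norm_eq_one {E : Type*} [NormedAddCommGroup E] [InnerProductSpace ℂ E]
    {μ : ℂ} (hμ : ‖μ‖ = 1) (w ζ : E) : inner ℂ (μ • w) (μ • ζ) = inner ℂ w ζ := by
  rw [inner_smul_left, inner_smul_right, ← mul_assoc, ← Complex.normSq_eq_conj_mul_self,
    Complex.normSq_eq_norm_sq, hμ]
  simp

end

variable {n : ℕ}

lemma norm_le_lieNorm (ζ : EuclideanSpace ℂ (Fin n)) : ‖ζ‖ ≤ lieNorm n ζ :=
  Real.le_sqrt_of_sq_le (le_add_of_nonneg_right (Real.sqrt_nonneg _))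

lemma lieNorm_smul (c : ℂ) (ζ : EuclideanSpace ℂ (Fin n)) :
    lieNorm n (c • ζ) = ‖c‖ * lieNorm n ζ := by
  have hsum : ‖∑ j, (c • ζ) j ^ 2‖ = ‖c‖ ^ 2 * ‖∑ j, ζ j ^ 2‖ := by
    simp only [PiLp.smul_apply, smul_eq_mul, mul_pow, ← mul_sum, norm_mul, norm_pow]
  have ha : 0 ≤ ‖c‖ := norm_nonneg c
  have hexpand : (‖c‖ * ‖ζ‖) ^ 4 - (‖c‖ ^ 2 * ‖∑ j, ζ j ^ 2‖) ^ 2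
      = (‖c‖ ^ 2) ^ 2 * (‖ζ‖ ^ 4 - ‖∑ j, ζ j ^ 2‖ ^ 2) := by ring
  rw [lieNorm, lieNorm, norm_smul, hsum, hexpand, Real.sqrt_mul (by positivity),
    Real.sqrt_sq (by positivity), mul_pow, ← mul_add, Real.sqrt_mul (by positivity),
    Real.sqrt_sq ha]

lemma exists_norm_eq_one_sum_re_mul_im_smul_eq_zero (ζ : EuclideanSpace ℂ (Fin n)) :
    ∃ μ : ℂ, ‖μ‖ = 1 ∧ ∑ j, ((μ • ζ) j).re * ((μ • ζ) j).im = 0 := by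
  set s := ∑ j, ζ j ^ 2
  set μ := Complex.exp (↑(-(s.arg / 2)) * Complex.I)
  have hμs : μ ^ 2 * s = ‖s‖ := by
    conv_lhs => rw [← Complex.norm_mul_exp_arg_mul_I s]
    rw [← Complex.exp_nat_mul, mul_left_comm, ← Complex.exp_add]
    push_cast
    ring_nf
    rw [Complex.exp_zero, mul_one]
  refine ⟨μ, Complex.norm_exp_ofReal_mul_I _, ?_⟩
  have him : (∑ j, (μ • ζ) j ^ 2).im = 0 := by
    simp only [PiLp.smul_apply, smul_eq_mul, mul_pow, ← mul_sum]
    rw [hμs, Complex.ofReal_im]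
  linarith [im_sum_sq univ (μ • ζ)]

lemma lieNorm_eq_of_sum_re_mul_im_eq_zero (ζ : EuclideanSpace ℂ (Fin n))
    (hζ : ∑ j, (ζ j).re * (ζ j).im = 0) :
    lieNorm n ζ = √(∑ j, (ζ j).re ^ 2) + √(∑ j, (ζ j).im ^ 2) := by
  set X := ∑ j, (ζ j).re ^ 2
  set Y := ∑ j, (ζ j).im ^ 2
  have hX : 0 ≤ X := by positivity
  have hY : 0 ≤ Y := by positivity
  have hsum : ‖∑ j, ζ j ^ 2‖ ^ 2 = (X - Y) ^ 2 := by
    rw [Complex.sq_norm, Complex.normSq_apply, re_sum_sq, im_sum_sq, hζ]; ring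
  have hdisc : (X + Y) ^ 2 - (X - Y) ^ 2 = (2 * (√X * √Y)) ^ 2 := by
    rw [mul_pow, mul_pow, Real.sq_sqrt hX, Real.sq_sqrt hY]; ring
  have hsq : X + Y + 2 * (√X * √Y) = (√X + √Y) ^ 2 := by
    rw [add_sq, Real.sq_sqrt hX, Real.sq_sqrt hY]; ring
  rw [lieNorm, show ‖ζ‖ ^ 4 = (‖ζ‖ ^ 2) ^ 2 by ring, norm_sq_eq_sum_re_sq_add_sum_im_sq, hsum,
    hdisc, Real.sqrt_sq (by positivity), hsq, Real.sqrt_sq (by positivity)]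

def lieDualBall (n : ℕ) : Set (EuclideanSpace ℂ (Fin n)) :=
  {w | ∀ μ : ℂ, ‖μ‖ = 1 → ∑ j, (μ * w j).re ^ 2 ≤ 1}

lemma smul_mem_lieDualBall {μ : ℂ} (hμ : ‖μ‖ = 1) {w : EuclideanSpace ℂ (Fin n)}
    (hw : w ∈ lieDualBall n) : μ • w ∈ lieDualBall n := fun ν hν => by
  simpa only [PiLp.smul_apply, smul_eq_mul, mul_assoc] using
    hw (ν * μ) (by rw [norm_mul, hν, hμ, one_mul])

lemma sum_re_sq_le_one_of_mem_lieDualBall {w : EuclideanSpace ℂ (Fin n)}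
    (hw : w ∈ lieDualBall n) : ∑ j, (w j).re ^ 2 ≤ 1 := by
  simpa using hw 1 norm_one

lemma sum_im_sq_le_one_of_mem_lieDualBall {w : EuclideanSpace ℂ (Fin n)}
    (hw : w ∈ lieDualBall n) : ∑ j, (w j).im ^ 2 ≤ 1 := by
  simpa using hw (-Complex.I) (by simp)

lemma mem_lieDualBall_of_sum_re_mul_im_eq_zero {w : EuclideanSpace ℂ (Fin n)}
    (hre : ∑ j, (w j).re ^ 2 ≤ 1) (him : ∑ j, (w j).im ^ 2 ≤ 1)
    (horth : ∑ j, (w j).re * (w j).im = 0) : w ∈ lieDualBall n := fun μ hμ => by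
  have hμ' : μ.re ^ 2 + μ.im ^ 2 = 1 := by
    have h := Complex.normSq_eq_norm_sq μ
    rw [Complex.normSq_apply, hμ] at h
    linarith
  have hexpand : ∑ j, (μ * w j).re ^ 2 = μ.re ^ 2 * ∑ j, (w j).re ^ 2
      - 2 * μ.re * μ.im * ∑ j, (w j).re * (w j).im + μ.im ^ 2 * ∑ j, (w j).im ^ 2 := by
    simp only [Complex.mul_re, mul_sum, ← sum_sub_distrib, ← sum_add_distrib]
    exact sum_congr rfl fun j _ => by ring
  rw [hexpand, horth]
  nlinarith [sq_nonneg μ.re, sq_nonneg μ.im]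

lemma re_inner_le_lieNorm {w : EuclideanSpace ℂ (Fin n)} (hw : w ∈ lieDualBall n)
    (ζ : EuclideanSpace ℂ (Fin n)) : (inner ℂ w ζ).re ≤ lieNorm n ζ := by
  obtain ⟨μ, hμ, horth⟩ := exists_norm_eq_one_sum_re_mul_im_smul_eq_zero ζ
  have hμw := smul_mem_lieDualBall hμ hw
  calc (inner ℂ w ζ).re = (inner ℂ (μ • w) (μ • ζ)).re := by
        rw [inner_smul_smul_of_norm_eq_one hμ]
    _ ≤ lieNorm n (μ • ζ) := by
        rw [lieNorm_eq_of_sum_re_mul_im_eq_zero _ horth]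
        exact re_inner_le_sqrt_add_sqrt (sum_re_sq_le_one_of_mem_lieDualBall hμw)
          (sum_im_sq_le_one_of_mem_lieDualBall hμw) _
    _ = lieNorm n ζ := by rw [lieNorm_smul, hμ, one_mul]

lemma exists_mem_lieDualBall_re_inner_eq_of_sum_re_mul_im_eq_zero
    (ζ : EuclideanSpace ℂ (Fin n)) (hζ : ∑ j, (ζ j).re * (ζ j).im = 0) :
    ∃ w ∈ lieDualBall n, (inner ℂ w ζ).re = √(∑ j, (ζ j).re ^ 2) + √(∑ j, (ζ j).im ^ 2) := by
  set X := ∑ j, (ζ j).re ^ 2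
  set Y := ∑ j, (ζ j).im ^ 2
  set w : EuclideanSpace ℂ (Fin n) :=
    WithLp.toLp 2 fun j => ⟨(ζ j).re / √X, (ζ j).im / √Y⟩
  have hre : ∑ j, (w j).re ^ 2 = X / X := by
    simp only [w, div_pow, Real.sq_sqrt (by positivity : 0 ≤ X), ← sum_div]
    rfl
  have him : ∑ j, (w j).im ^ 2 = Y / Y := by
    simp only [w, div_pow, Real.sq_sqrt (by positivity : 0 ≤ Y), ← sum_div]
    rfl
  have horth : ∑ j, (w j).re * (w j).im = 0 := by
    simp only [w, div_mul_div_comm, ← sum_div, hζ, zero_div]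
  refine ⟨w, mem_lieDualBall_of_sum_re_mul_im_eq_zero (hre ▸ div_self_le_one X)
    (him ▸ div_self_le_one Y) horth, ?_⟩
  simp only [re_inner, w, div_mul_eq_mul_div, ← sq, ← sum_div]
  exact congrArg₂ (· + ·) (Real.div_sqrt (x := X)) (Real.div_sqrt (x := Y))

lemma exists_mem_lieDualBall_re_inner_eq_lieNorm (ζ : EuclideanSpace ℂ (Fin n)) :
    ∃ w ∈ lieDualBall n, (inner ℂ w ζ).re = lieNorm n ζ := by
  obtain ⟨μ, hμ, horth⟩ := exists_norm_eq_one_sum_re_mul_im_smul_eq_zero ζ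
  obtain ⟨w, hw, hwζ⟩ := exists_mem_lieDualBall_re_inner_eq_of_sum_re_mul_im_eq_zero _ horth
  have hμ' : ‖(starRingEnd ℂ) μ‖ = 1 := by rwa [Complex.norm_conj]
  refine ⟨starRingEnd ℂ μ • w, smul_mem_lieDualBall hμ' hw, ?_⟩
  rw [← inner_smul_smul_of_norm_eq_one hμ, smul_smul, Complex.mul_conj', hμ, Complex.ofReal_one,
    one_pow, one_smul, hwζ, ← lieNorm_eq_of_sum_re_mul_im_eq_zero _ horth, lieNorm_smul, hμ,
    one_mul]

end LieNorm

/-- The function `ζ ↦ (|ζ|² + √(|ζ|⁴ − ||ζ|_ℂ²|²))^{1/2}` is a norm on `ℂⁿ`. -/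
theorem lieNorm_is_norm (n : ℕ) :
    (∀ ζ : EuclideanSpace ℂ (Fin n), 0 ≤ lieNorm n ζ) ∧
    (∀ ζ : EuclideanSpace ℂ (Fin n), lieNorm n ζ = 0 ↔ ζ = 0) ∧
    (∀ (c : ℂ) (ζ : EuclideanSpace ℂ (Fin n)),
      lieNorm n (c • ζ) = ‖c‖ * lieNorm n ζ) ∧
    (∀ ζ χ : EuclideanSpace ℂ (Fin n),
      lieNorm n (ζ + χ) ≤ lieNorm n ζ + lieNorm n χ) := by
  refine ⟨fun ζ => Real.sqrt_nonneg _, fun ζ => ⟨fun h => ?_, ?_⟩, LieNorm.lieNorm_smul,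
    fun ζ χ => ?_⟩
  · exact norm_le_zero_iff.mp (h ▸ LieNorm.norm_le_lieNorm ζ)
  · rintro rfl
    simp [lieNorm]
  · obtain ⟨w, hw, hwζχ⟩ := LieNorm.exists_mem_lieDualBall_re_inner_eq_lieNorm (ζ + χ)
    rw [← hwζχ, inner_add_right, Complex.add_re]
    exact add_le_add (LieNorm.re_inner_le_lieNorm hw ζ) (LieNorm.re_inner_le_lieNorm hw χ)
end

section
/- Let ζ = ξ + iη ∈ ℂ^{n+1} with ξ, η ∈ ℝ^{n+1}, η ≠ 0. The set γ_ℂ(ζ) = {x ∈ ℝ^{n+1} : Σ_j (x_j − ζ_j)² = 0} is contained in the sphere of radius r = √(|ξ|²cos²θ + (|ξ| sin θ + |η|)²) centered at the origin, where θ = ∠(ξ,η) is the angle between ξ and η; in particular every x ∈ γ_ℂ(ζ) satisfies |x| ≤ √(|ξ|² + |η|² + 2(|ξ|²|η|² − ⟨ξ,η⟩²)^{1/2}). -/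
/-!
Writing `v = x - ξ`, the equation `∑ⱼ (vⱼ - i ηⱼ)² = 0` splits into `‖v‖ = ‖η‖` and `⟪v, η⟫ = 0`.
Then `‖x‖² = ‖ξ‖² + 2⟪ξ, v⟫ + ‖η‖²`, and since `v ⊥ η` the angle between `ξ` and `v` is at least
`|θ - π/2|`, so `⟪ξ, v⟫ ≤ ‖ξ‖‖η‖ sin θ`. Both radii in the statement are the square root of
`‖ξ‖² + ‖η‖² + 2‖ξ‖‖η‖ sin θ`.
-/

open scoped RealInnerProductSpace
open InnerProductGeometry Real

/-- `γ_ℂ(ζ)` for `ζ = ξ + iη`, parametrised by the real and imaginary parts of `ζ`. -/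
def gammaC {ι : Type*} [Fintype ι] (ξ η : EuclideanSpace ℝ ι) : Set (EuclideanSpace ℝ ι) :=
  {x | ∑ j, ((x j : ℂ) - ((ξ j : ℂ) + (η j : ℂ) * Complex.I)) ^ 2 = 0}

theorem mem_gammaC_iff {ι : Type*} [Fintype ι] {ξ η x : EuclideanSpace ℝ ι} :
    x ∈ gammaC ξ η ↔ ‖x - ξ‖ = ‖η‖ ∧ ⟪x - ξ, η⟫ = 0 := by
  have hsum : ∑ j, ((x j : ℂ) - ((ξ j : ℂ) + (η j : ℂ) * Complex.I)) ^ 2 =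
      ⟨‖x - ξ‖ ^ 2 - ‖η‖ ^ 2, -2 * ⟪x - ξ, η⟫⟩ := by
    rw [← real_inner_self_eq_norm_sq, ← real_inner_self_eq_norm_sq]
    apply Complex.ext <;>
      simp only [Complex.re_sum, Complex.im_sum, PiLp.inner_apply, Finset.mul_sum,
        ← Finset.sum_sub_distrib] <;>
      refine Finset.sum_congr rfl fun j _ => ?_
    · simp [sq]
    · simp [sq]; ring
  rw [gammaC, Set.mem_ofPred_eq, hsum, Complex.ext_iff]
  simp [sub_eq_zero, sq_eq_sq₀ (norm_nonneg _) (norm_nonneg _)]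

section InnerProductSpace

variable {V : Type*} [NormedAddCommGroup V] [InnerProductSpace ℝ V]

theorem inner_le_norm_mul_norm_mul_sin_angle {ξ η y : V} (hy : ⟪y, η⟫ = 0) :
    ⟪ξ, y⟫ ≤ ‖ξ‖ * ‖y‖ * sin (angle ξ η) := by
  have hyη : angle y η = π / 2 := inner_eq_zero_iff_angle_eq_pi_div_two y η |>.1 hy
  -- the triangle inequality for angles through `y` and through `η` gives `|∠ξη - π/2| ≤ ∠ξy`
  have h₁ : angle ξ η ≤ angle ξ y + π / 2 := hyη ▸ angle_le_angle_add_angle ξ y η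
  have h₂ : π / 2 ≤ angle ξ η + angle ξ y := by
    simpa [angle_comm η, hyη] using angle_le_angle_add_angle η ξ y
  have hcos : cos (angle ξ y) ≤ sin (angle ξ η) := by
    rw [← cos_sub_pi_div_two, ← cos_abs (angle ξ η - π / 2)]
    exact cos_le_cos_of_nonneg_of_le_pi (abs_nonneg _) (angle_le_pi ξ y)
      (abs_sub_le_iff.2 ⟨by linarith, by linarith⟩)
  rw [← cos_angle_mul_norm_mul_norm]
  nlinarith [mul_nonneg (norm_nonneg ξ) (norm_nonneg y)]

theorem sqrt_norm_sq_mul_norm_sq_sub_inner_sq (x y : V) :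
    √(‖x‖ ^ 2 * ‖y‖ ^ 2 - ⟪x, y⟫ ^ 2) = ‖x‖ * ‖y‖ * sin (angle x y) := by
  rw [mul_comm (‖x‖ * ‖y‖), sin_angle_mul_norm_mul_norm, real_inner_self_eq_norm_sq,
    real_inner_self_eq_norm_sq, sq ⟪x, y⟫]

theorem norm_sq_le_of_norm_sub_eq_of_inner_sub_eq_zero {ξ η x : V} (h₁ : ‖x - ξ‖ = ‖η‖)
    (h₂ : ⟪x - ξ, η⟫ = 0) :
    ‖x‖ ^ 2 ≤ ‖ξ‖ ^ 2 + ‖η‖ ^ 2 + 2 * (‖ξ‖ * ‖η‖ * sin (angle ξ η)) := by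
  have hξ := inner_le_norm_mul_norm_mul_sin_angle (ξ := ξ) h₂
  calc ‖x‖ ^ 2 = ‖ξ + (x - ξ)‖ ^ 2 := by rw [add_sub_cancel]
    _ = ‖ξ‖ ^ 2 + 2 * ⟪ξ, x - ξ⟫ + ‖x - ξ‖ ^ 2 := norm_add_sq_real _ _
    _ ≤ _ := by rw [h₁] at hξ ⊢; linarith

end InnerProductSpace

theorem gammaC_subset_sphere_general (n : ℕ) (ξ η : EuclideanSpace ℝ (Fin (n + 1)))
    (x : EuclideanSpace ℝ (Fin (n + 1)))
    (hx : ∑ j, ((x j : ℂ) - ((ξ j : ℂ) + (η j : ℂ) * Complex.I)) ^ 2 = 0) :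
    ‖x‖ ≤ Real.sqrt (‖ξ‖ ^ 2 * Real.cos (InnerProductGeometry.angle ξ η) ^ 2 +
        (‖ξ‖ * Real.sin (InnerProductGeometry.angle ξ η) + ‖η‖) ^ 2) ∧
    ‖x‖ ≤ Real.sqrt (‖ξ‖ ^ 2 + ‖η‖ ^ 2 +
        2 * Real.sqrt (‖ξ‖ ^ 2 * ‖η‖ ^ 2 - ⟪ξ, η⟫ ^ 2)) := by
  obtain ⟨h₁, h₂⟩ := mem_gammaC_iff.1 hx
  have hle := le_sqrt_of_sq_le (norm_sq_le_of_norm_sub_eq_of_inner_sub_eq_zero h₁ h₂)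
  have hrad : ‖ξ‖ ^ 2 * cos (angle ξ η) ^ 2 + (‖ξ‖ * sin (angle ξ η) + ‖η‖) ^ 2 =
      ‖ξ‖ ^ 2 + ‖η‖ ^ 2 + 2 * (‖ξ‖ * ‖η‖ * sin (angle ξ η)) := by
    linear_combination ‖ξ‖ ^ 2 * sin_sq_add_cos_sq (angle ξ η)
  rw [hrad, sqrt_norm_sq_mul_norm_sq_sub_inner_sq]
  exact ⟨hle, hle⟩

/-- For `ζ = ξ + iη` with `η ≠ 0`, every `x ∈ γ_ℂ(ζ)` (that is,
`Σ_j (x_j − ζ_j)² = 0`) satisfies `|x| ≤ √(|ξ|²cos²θ + (|ξ|sinθ + |η|)²)` where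
`θ = ∠(ξ,η)`, and in particular `|x| ≤ √(|ξ|² + |η|² + 2(|ξ|²|η|² − ⟨ξ,η⟩²)^{1/2})`. -/
theorem gammaC_subset_sphere (n : ℕ) (ξ η : EuclideanSpace ℝ (Fin (n + 1)))
    (hη : η ≠ 0) (x : EuclideanSpace ℝ (Fin (n + 1)))
    (hx : ∑ j, ((x j : ℂ) - ((ξ j : ℂ) + (η j : ℂ) * Complex.I)) ^ 2 = 0) :
    ‖x‖ ≤ Real.sqrt (‖ξ‖ ^ 2 * Real.cos (InnerProductGeometry.angle ξ η) ^ 2 +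
        (‖ξ‖ * Real.sin (InnerProductGeometry.angle ξ η) + ‖η‖) ^ 2) ∧
    ‖x‖ ≤ Real.sqrt (‖ξ‖ ^ 2 + ‖η‖ ^ 2 +
        2 * Real.sqrt (‖ξ‖ ^ 2 * ‖η‖ ^ 2 - ⟪ξ, η⟫ ^ 2)) :=
  gammaC_subset_sphere_general n ξ η x hx
end

section
/- Let φ : ℝⁿ → ℝ be a smooth function that is harmonic and homogeneous of degree k. Then the function W(x) = φ(𝐱) + x_0 D̄_𝐱 φ(𝐱), where x = x_0 e_0 + 𝐱 ∈ ℝ^{n+1} and D̄_𝐱 = −Σ_{j=1}^n e_j ∂_j, is left monogenic on ℝ^{n+1}: (∂_0 + Σ_{j=1}^n e_j ∂_j) W = 0; moreover W equals D̄(x_0 φ(𝐱)) where D̄ = e_0∂_0 − Σ_{j=1}^n e_j∂_j. -/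
/-- If `φ : ℝⁿ → ℝ` is smooth, harmonic and homogeneous of degree `k`,
then `W(x) = φ(𝐱) + x₀ D̄_𝐱 φ(𝐱)` (for `x = x₀e₀ + 𝐱 ∈ ℝ^{n+1}`,
`D̄_𝐱 = −Σ_{j=1}^n e_j ∂_j`) is left monogenic on `ℝ^{n+1}`:
`(∂₀ + Σ_j e_j ∂_j) W = 0`; moreover `W = D̄(x₀ φ(𝐱))` with
`D̄ = e₀∂₀ − Σ_{j=1}^n e_j ∂_j`.  The Clifford algebra `ℝ_{(n)}` is represented as a
normed algebra `A` with generators `e j` satisfying `e j² = −1` and anticommutation. -/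
theorem monogenic_extension_of_harmonic_homogeneous (n k : ℕ)
    (A : Type*) [NormedRing A] [NormedAlgebra ℝ A] (e : Fin n → A)
    (hsq : ∀ j, e j * e j = -1)
    (hanti : ∀ j l, j ≠ l → e j * e l = -(e l * e j))
    (φ : (Fin n → ℝ) → ℝ) (hφ : ContDiff ℝ (⊤ : ℕ∞) φ)
    (hharm : ∀ y : Fin n → ℝ,
      ∑ j, fderiv ℝ (fun z => fderiv ℝ φ z (Pi.single j 1)) y (Pi.single j 1) = 0)
    (hhom : ∀ c : ℝ, 0 < c → ∀ y : Fin n → ℝ, φ (c • y) = c ^ k * φ y)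
    (W : (Fin (n + 1) → ℝ) → A)
    (hW : ∀ x : Fin (n + 1) → ℝ, W x =
      φ (fun j => x j.succ) • (1 : A) +
        (x 0) • (-(∑ j, (fderiv ℝ φ (fun i => x i.succ) (Pi.single j 1)) • e j))) :
    ∀ x : Fin (n + 1) → ℝ,
      (fderiv ℝ W x (Pi.single 0 1) +
        ∑ j : Fin n, e j * fderiv ℝ W x (Pi.single j.succ 1) = 0) ∧
      W x = (fderiv ℝ (fun y : Fin (n + 1) → ℝ => y 0 * φ (fun i => y i.succ)) x
              (Pi.single 0 1)) • (1 : A) -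
            ∑ j : Fin n, (fderiv ℝ (fun y : Fin (n + 1) → ℝ => y 0 * φ (fun i => y i.succ)) x
              (Pi.single j.succ 1)) • e j := by
  classical
  intro x
  -- projection onto the "spatial" variables
  set π : (Fin (n+1) → ℝ) →L[ℝ] (Fin n → ℝ) :=
    ContinuousLinearMap.pi (fun j : Fin n => ContinuousLinearMap.proj j.succ) with hπdef
  have hπ0 : π (Pi.single (0 : Fin (n+1)) 1) = 0 := by
    funext j
    have : ((Pi.single (0 : Fin (n+1)) 1 : Fin (n+1) → ℝ)) j.succ = 0 :=
      Pi.single_eq_of_ne (Fin.succ_ne_zero j) 1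
    simpa [hπdef] using this
  have hπs : ∀ l : Fin n, π (Pi.single (l.succ : Fin (n+1)) 1) = Pi.single l 1 := by
    intro l
    funext j
    have : ((Pi.single (l.succ : Fin (n+1)) 1 : Fin (n+1) → ℝ)) j.succ
        = (Pi.single l 1 : Fin n → ℝ) j := by
      simp [Pi.single_apply, Fin.succ_inj]
    simpa [hπdef] using this
  have hφdiff : Differentiable ℝ φ := hφ.differentiable (by simp)
  have hΦdiff : Differentiable ℝ (fderiv ℝ φ) :=
    (hφ.fderiv_right (m := 1) (by exact WithTop.coe_le_coe.mpr (le_top : (((1 + 1 : ℕ) : ℕ∞)) ≤ ⊤))).differentiable one_ne_zero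
  -- derivative of y ↦ (fderiv φ y) (single j 1)
  have hq : ∀ (j : Fin n) (y : Fin n → ℝ),
      HasFDerivAt (fun z => fderiv ℝ φ z (Pi.single j 1))
        ((fderiv ℝ (fderiv ℝ φ) y).flip (Pi.single j 1)) y := by
    intro j y
    have h := (hΦdiff y).hasFDerivAt.clm_apply
      (hasFDerivAt_const (Pi.single j (1:ℝ)) y)
    simpa using h
  -- abbreviations
  set p : Fin n → ℝ := fun j => fderiv ℝ φ (π x) (Pi.single j 1) with hp
  set D2 : (Fin n → ℝ) →L[ℝ] (Fin n → ℝ) →L[ℝ] ℝ := fderiv ℝ (fderiv ℝ φ) (π x) with hD2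
  -- g and its derivative
  set g : (Fin n → ℝ) → A := fun y => -(∑ j, (fderiv ℝ φ y (Pi.single j 1)) • e j) with hg
  set G' : (Fin n → ℝ) →L[ℝ] A :=
    -(∑ j, ((fderiv ℝ (fderiv ℝ φ) (π x)).flip (Pi.single j 1)).smulRight (e j)) with hG'
  have hgd : HasFDerivAt g G' (π x) := by
    have h : HasFDerivAt (fun y => ∑ j, (fderiv ℝ φ y (Pi.single j 1)) • e j)
        (∑ j, ((fderiv ℝ (fderiv ℝ φ) (π x)).flip (Pi.single j 1)).smulRight (e j)) (π x) :=
      HasFDerivAt.fun_sum (fun j _ => (hq j (π x)).smul_const (e j))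
    rw [hg, hG']
    exact h.neg
  -- the function F equals W
  have hWF : W = fun x' => φ (π x') • (1:A) + x' 0 • g (π x') := by
    funext x'
    rw [hW x', hg, hπdef]
    rfl
  have h2b : HasFDerivAt (fun x' : Fin (n+1) → ℝ => x' 0)
      (ContinuousLinearMap.proj (R := ℝ) (φ := fun _ : Fin (n+1) => ℝ) (0 : Fin (n+1))) x :=
    (ContinuousLinearMap.proj (R := ℝ) (φ := fun _ : Fin (n+1) => ℝ) (0 : Fin (n+1))).hasFDerivAt
  have h1 : HasFDerivAt (fun x' => φ (π x')) ((fderiv ℝ φ (π x)).comp π) x :=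
    (hφdiff (π x)).hasFDerivAt.comp x π.hasFDerivAt
  -- derivative of W
  set L : (Fin (n+1) → ℝ) →L[ℝ] A :=
    ((fderiv ℝ φ (π x)).comp π).smulRight (1:A) +
      (x 0 • (G'.comp π) + (ContinuousLinearMap.proj (R := ℝ) (φ := fun _ : Fin (n+1) => ℝ) (0 : Fin (n+1))).smulRight (g (π x)))
    with hL
  have hFd : HasFDerivAt W L x := by
    rw [hWF, hL]
    have h2a : HasFDerivAt (fun x' => g (π x')) (G'.comp π) x :=
      hgd.comp x π.hasFDerivAt
    exact (h1.smul_const (1:A)).add (h2b.smul h2a)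
  have hfW : fderiv ℝ W x = L := hFd.fderiv
  -- values of L on basis vectors
  have hL0 : L (Pi.single (0 : Fin (n+1)) 1) = g (π x) := by
    simp [hL, hπ0, Pi.single_eq_same]
  have hs0 : ∀ l : Fin n, (Pi.single (l.succ : Fin (n+1)) 1 : Fin (n+1) → ℝ) 0 = 0 :=
    fun l => Pi.single_eq_of_ne (Fin.succ_ne_zero l).symm 1
  have hLs : ∀ l : Fin n, L (Pi.single (l.succ : Fin (n+1)) 1) =
      p l • (1:A) + x 0 • (G' (Pi.single l 1)) := by
    intro l
    simp [hL, hπs l, hs0 l, hp]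
  have hG'app : ∀ l : Fin n, G' (Pi.single l 1) =
      -(∑ j, (D2 (Pi.single l 1) (Pi.single j 1)) • e j) := by
    intro l
    simp [hG', hD2]
  -- Schwarz symmetry
  have hsymm : ∀ v w, D2 v w = D2 w v := by
    rw [hD2]
    exact second_derivative_symmetric (fun y => (hφdiff y).hasFDerivAt)
      (hΦdiff (π x)).hasFDerivAt
  -- harmonicity in terms of D2
  have hdiag : ∑ j, D2 (Pi.single j 1) (Pi.single j 1) = 0 := by
    have h := hharm (π x)
    have heq : ∀ j : Fin n, fderiv ℝ (fun z => fderiv ℝ φ z (Pi.single j 1)) (π x)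
        (Pi.single j 1) = D2 (Pi.single j 1) (Pi.single j 1) := by
      intro j
      rw [(hq j (π x)).fderiv]
      simp [hD2]
    rw [Finset.sum_congr rfl (fun j _ => heq j)] at h
    exact h
  -- the key algebraic cancellation
  have hS : ∑ l, ∑ j, (D2 (Pi.single l 1) (Pi.single j 1)) • (e l * e j) = 0 := by
    set S : A := ∑ l, ∑ j, (D2 (Pi.single l 1) (Pi.single j 1)) • (e l * e j) with hSdef
    have hswap : S = ∑ l, ∑ j, (D2 (Pi.single j 1) (Pi.single l 1)) • (e j * e l) := by
      rw [hSdef]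
      exact Finset.sum_comm
    have h2 : S + S = 0 := by
      nth_rewrite 2 [hswap]
      rw [hSdef, ← Finset.sum_add_distrib]
      have hinner : ∀ l : Fin n,
          ((∑ j, (D2 (Pi.single l 1) (Pi.single j 1)) • (e l * e j)) +
          (∑ j, (D2 (Pi.single j 1) (Pi.single l 1)) • (e j * e l))) =
          (-2 * D2 (Pi.single l 1) (Pi.single l 1)) • (1:A) := by
        intro l
        rw [← Finset.sum_add_distrib]
        have hterm : ∀ j ∈ Finset.univ, ((D2 (Pi.single l 1) (Pi.single j 1)) • (e l * e j) +
            (D2 (Pi.single j 1) (Pi.single l 1)) • (e j * e l)) =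
            if j = l then (-2 * D2 (Pi.single l 1) (Pi.single l 1)) • (1:A) else 0 := by
          intro j _
          by_cases hjl : j = l
          · subst hjl
            rw [if_pos rfl, hsq j, smul_neg, ← neg_add, ← add_smul, ← neg_smul]
            congr 1
            ring
          · rw [if_neg hjl, hsymm (Pi.single j 1) (Pi.single l 1),
              hanti j l hjl, smul_neg]
            exact add_neg_cancel _
        rw [Finset.sum_congr rfl hterm, Finset.sum_ite_eq' Finset.univ l
          (fun _ => (-2 * D2 (Pi.single l 1) (Pi.single l 1)) • (1:A))]
        simp
      rw [Finset.sum_congr rfl (fun l _ => hinner l)]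
      rw [← Finset.sum_smul]
      have hz : ∑ l, (-2 * D2 (Pi.single l 1) (Pi.single l 1)) = 0 := by
        rw [← Finset.mul_sum, hdiag, mul_zero]
      rw [hz, zero_smul]
    have h2' : (2:ℝ) • S = 0 := by rw [two_smul]; exact h2
    have h3 := congrArg (fun z => (2:ℝ)⁻¹ • z) h2'
    simpa [smul_smul] using h3
  constructor
  · -- monogenicity
    rw [hfW, hL0]
    have hmul : ∀ j : Fin n, e j * L (Pi.single (j.succ : Fin (n+1)) 1) =
        p j • e j + x 0 • (e j * G' (Pi.single j 1)) := by
      intro j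
      rw [hLs j, mul_add, mul_smul_comm, mul_one, mul_smul_comm]
    rw [Finset.sum_congr rfl (fun j _ => hmul j), Finset.sum_add_distrib]
    have h1' : ∑ j, x 0 • (e j * G' (Pi.single j 1)) = 0 := by
      rw [← Finset.smul_sum]
      have hz : ∑ j, e j * G' (Pi.single j 1) = 0 := by
        have heach : ∀ l : Fin n, e l * G' (Pi.single l 1) =
            -(∑ j, (D2 (Pi.single l 1) (Pi.single j 1)) • (e l * e j)) := by
          intro l
          rw [hG'app l, mul_neg, Finset.mul_sum]
          congr 1
          exact Finset.sum_congr rfl (fun j _ => (mul_smul_comm _ _ _))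
        rw [Finset.sum_congr rfl (fun l _ => heach l), Finset.sum_neg_distrib, hS, neg_zero]
      rw [hz, smul_zero]
    rw [h1', add_zero, hg]
    simp only [hp]
    exact neg_add_cancel _
  · -- W = D̄ (x₀ φ)
    have hGd : HasFDerivAt (fun y : Fin (n+1) → ℝ => y 0 * φ (fun i => y i.succ))
        (x 0 • ((fderiv ℝ φ (π x)).comp π) +
          φ (π x) • (ContinuousLinearMap.proj (R := ℝ) (φ := fun _ : Fin (n+1) => ℝ) (0 : Fin (n+1)))) x := by
      have h := h2b.fun_mul h1
      exact h
    rw [hGd.fderiv, hW x]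
    have happ0 : (x 0 • ((fderiv ℝ φ (π x)).comp π) +
        φ (π x) • (ContinuousLinearMap.proj (R := ℝ) (φ := fun _ : Fin (n+1) => ℝ) (0 : Fin (n+1))))
        (Pi.single (0 : Fin (n+1)) 1) = φ (π x) := by
      simp [hπ0, Pi.single_eq_same]
    have happs : ∀ l : Fin n, (x 0 • ((fderiv ℝ φ (π x)).comp π) +
        φ (π x) • (ContinuousLinearMap.proj (R := ℝ) (φ := fun _ : Fin (n+1) => ℝ) (0 : Fin (n+1))))
        (Pi.single (l.succ : Fin (n+1)) 1) = x 0 * p l := by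
      intro l
      simp [hπs l, hs0 l, hp]
    rw [happ0]
    simp only [happs]
    have hpieq : (fun j : Fin n => x j.succ) = π x := rfl
    rw [hpieq]
    have hpj : ∀ j : Fin n, fderiv ℝ φ (π x) (Pi.single j 1) = p j := fun j => rfl
    simp only [hpj]
    rw [smul_neg, Finset.smul_sum, sub_eq_add_neg]
    congr 1
    congr 1
    exact Finset.sum_congr rfl (fun j _ => smul_smul _ _ _)
end
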